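/- Let 1 ≤ k ≤ n and c ≥ 1. Consider the experiment of choosing a binary string A of length n with exactly k ones uniformly at random and then choosing one of its chains uniformly at random; let Pr(C = c) denote the probability that the chosen chain has length c. Then Pr(C = c) = ∑_{p} [C(n - k + 1, |p|) / C(n, k)] · (number of parts of p equal to c) / |p|, where the sum ranges over all compositions p of k and |p| denotes the number of parts of p. Equivalently, (1 / C(n,k)) · ∑_{A} (number of c-chains of A) / (number of chains of A) = ∑_{p} [C(n - k + 1, |p|) / C(n, k)] · (number of parts of p equal to c) / |p|, where the left sum ranges over all binary strings A of length n with exactly k ones. -/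

import Mathlib

/-- The run-length sequence of a binary string: the list of lengths of its
maximal runs of `true`s (chains), in left-to-right order. -/
def runLengths (l : List Bool) : List ℕ :=
  ((l.splitBy (· == ·)).filter (fun g => g.head? == some true)).map List.length

namespace RL

theorem loop_eq_append (r : Bool → Bool → Bool) (l : List Bool) (a : Bool) (g : List Bool)
    (gs : List (List Bool)) :
    List.splitBy.loop r l a g gs = gs.reverse ++ List.splitBy.loop r l a g [] := by
  induction l generalizing a g gs with
  | nil => simp [List.splitBy.loop]
  | cons b l IH =>
    simp only [List.splitBy.loop]
    split <;> rw [IH]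
    conv_rhs => rw [IH]
    simp

theorem loop_ne_head (l : List Bool) (b : Bool) (g : List Bool) (gs : List (List Bool))
    (h : l.head? ≠ some b) :
    List.splitBy.loop (· == ·) l b g gs
      = gs.reverse ++ (b :: g).reverse :: l.splitBy (· == ·) := by
  cases l with
  | nil => simp [List.splitBy.loop]
  | cons a l =>
    have hba : (b == a) = false := by
      simp only [List.head?_cons, ne_eq, Option.some.injEq] at h
      simp [Ne.symm h]
    rw [List.splitBy.loop, hba]
    simp only [List.splitBy]
    rw [loop_eq_append]
    simp

theorem splitBy_replicate_append (n : ℕ) (b : Bool) (l : List Bool)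
    (h : l.head? ≠ some b) (hn : 1 ≤ n) :
    (List.replicate n b ++ l).splitBy (· == ·)
      = List.replicate n b :: l.splitBy (· == ·) := by
  obtain ⟨m, rfl⟩ : ∃ m, n = m + 1 := ⟨n - 1, (Nat.succ_pred_eq_of_pos hn).symm⟩
  clear hn
  have key : ∀ m g gs, List.splitBy.loop (· == ·) (List.replicate m b ++ l) b g gs
      = gs.reverse ++ ((b :: g).reverse ++ List.replicate m b) :: l.splitBy (· == ·) := by
    intro m
    induction m with
    | zero => intro g gs; simpa using loop_ne_head l b g gs h
    | succ m IH =>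
      intro g gs
      rw [List.replicate_succ, List.cons_append, List.splitBy.loop]
      have : (b == b) = true := by simp
      rw [this]
      rw [IH (b :: g) gs]
      simp [List.replicate_succ']
  rw [List.replicate_succ, List.cons_append]
  show List.splitBy.loop (· == ·) (List.replicate m b ++ l) b [] [] = _
  rw [key m [] []]
  simp [List.replicate_succ]

theorem runLengths_nil : runLengths [] = [] := rfl

theorem runLengths_false_cons (l : List Bool) :
    runLengths (false :: l) = runLengths l := by
  obtain ⟨m, l', hl', rfl⟩ : ∃ m l', l'.head? ≠ some false ∧
      l = List.replicate m false ++ l' := by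
    refine ⟨(l.takeWhile (· == false)).length, l.dropWhile (· == false), ?_, ?_⟩
    · intro h
      have := List.head?_dropWhile_not (· == false) l
      rw [h] at this
      simp at this
    · conv_lhs => rw [← List.takeWhile_append_dropWhile (p := (· == false)) (l := l)]
      congr 1
      have : ∀ x ∈ l.takeWhile (· == false), x = false := by
        intro x hx
        have := List.mem_takeWhile_imp hx
        simpa using this
      exact List.eq_replicate_of_mem this
  have h1 : (false :: (List.replicate m false ++ l')) =
      List.replicate (m + 1) false ++ l' := by
    simp [List.replicate_succ]
  rw [h1]
  unfold runLengths
  rw [splitBy_replicate_append _ _ _ hl' (by omega)]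
  have h2 : (List.replicate (m+1) false).head? = some false := by
    simp [List.replicate_succ]
  cases Nat.eq_zero_or_pos m with
  | inl hm =>
    subst hm
    simp only [List.replicate, List.nil_append]
    simp [List.filter_cons, h2]
  | inr hm =>
    rw [splitBy_replicate_append _ _ _ hl' hm]
    have h3 : (List.replicate m false).head? = some false := by
      cases m with
      | zero => omega
      | succ p => simp [List.replicate_succ]
    simp [List.filter_cons, h2, h3]

theorem runLengths_true_run (b : ℕ) (hb : 1 ≤ b) (l : List Bool)
    (h : l.head? ≠ some true) :
    runLengths (List.replicate b true ++ l) = b :: runLengths l := by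
  rw [runLengths, splitBy_replicate_append _ _ _ h hb]
  have h2 : (List.replicate b true).head? = some true := by
    cases b with
    | zero => omega
    | succ m => simp [List.replicate_succ]
  simp [List.filter_cons, h2, runLengths]

theorem runLengths_true_replicate (b : ℕ) (hb : 1 ≤ b) :
    runLengths (List.replicate b true) = [b] := by
  have := runLengths_true_run b hb [] (by simp)
  simpa [runLengths_nil] using this

end RL

namespace RL

/-- Decompose any bool list by its leading block structure. -/
theorem boolList_cases (l : List Bool) :
    l = [] ∨ (∃ l', l = false :: l') ∨
    (∃ b, 1 ≤ b ∧ l = List.replicate b true) ∨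
    (∃ b l', 1 ≤ b ∧ l = List.replicate b true ++ false :: l') := by
  cases l with
  | nil => exact Or.inl rfl
  | cons a l =>
    cases a with
    | false => exact Or.inr (Or.inl ⟨l, rfl⟩)
    | true =>
      right; right
      obtain ⟨m, l', hl', hdec⟩ : ∃ m l', l'.head? ≠ some true ∧
          l = List.replicate m true ++ l' := by
        refine ⟨(l.takeWhile (· == true)).length, l.dropWhile (· == true), ?_, ?_⟩
        · intro h
          have := List.head?_dropWhile_not (· == true) l
          rw [h] at this
          simp at this
        · conv_lhs => rw [← List.takeWhile_append_dropWhile (p := (· == true)) (l := l)]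
          congr 1
          exact List.eq_replicate_of_mem (fun x hx => by
            simpa using List.mem_takeWhile_imp hx)
      cases l' with
      | nil =>
        left
        exact ⟨m + 1, by omega, by simp [hdec, List.replicate_succ]⟩
      | cons c l'' =>
        have hc : c = false := by
          cases c
          · rfl
          · simp at hl'
        right
        exact ⟨m + 1, l'', by omega, by simp [hdec, hc, List.replicate_succ]⟩

theorem boolList_rec {P : List Bool → Prop} (h0 : P [])
    (hf : ∀ l, P l → P (false :: l))
    (ht1 : ∀ b, 1 ≤ b → P (List.replicate b true))
    (ht2 : ∀ b l, 1 ≤ b → P l → P (List.replicate b true ++ false :: l)) :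
    ∀ l, P l := by
  suffices H : ∀ n l, l.length = n → P l from fun l => H _ l rfl
  intro n
  induction n using Nat.strong_induction_on with
  | _ n IH =>
  intro l hn
  subst hn
  rcases boolList_cases l with rfl | ⟨l', rfl⟩ | ⟨b, hb, rfl⟩ | ⟨b, l', hb, rfl⟩
  · exact h0
  · exact hf l' (IH l'.length (by simp) l' rfl)
  · exact ht1 b hb
  · exact ht2 b l' hb (IH l'.length (by simp; omega) l' rfl)

theorem runLengths_sum (l : List Bool) : (runLengths l).sum = l.count true := by
  induction l using boolList_rec with
  | h0 => rfl
  | hf l IH => rw [runLengths_false_cons]; simp [IH]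
  | ht1 b hb => rw [runLengths_true_replicate b hb]; simp
  | ht2 b l hb IH =>
    rw [runLengths_true_run b hb _ (by simp), runLengths_false_cons] at *
    simp [IH, List.count_append]

theorem runLengths_pos (l : List Bool) : ∀ x ∈ runLengths l, 0 < x := by
  induction l using boolList_rec with
  | h0 => simp [runLengths_nil]
  | hf l IH => rw [runLengths_false_cons]; exact IH
  | ht1 b hb => rw [runLengths_true_replicate b hb]; simp; omega
  | ht2 b l hb IH =>
    rw [runLengths_true_run b hb _ (by simp), runLengths_false_cons]
    intro x hx
    rcases List.mem_cons.mp hx with rfl | hx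
    · omega
    · exact IH x hx

end RL

namespace RL

def boolStrings : ℕ → Finset (List Bool)
  | 0 => {[]}
  | n + 1 => ((boolStrings n).image (List.cons false)) ∪ ((boolStrings n).image (List.cons true))

theorem mem_boolStrings (n : ℕ) (l : List Bool) : l ∈ boolStrings n ↔ l.length = n := by
  induction n generalizing l with
  | zero => simp [boolStrings, List.length_eq_zero_iff]
  | succ n IH =>
    simp only [boolStrings, Finset.mem_union, Finset.mem_image]
    constructor
    · rintro (⟨a, ha, rfl⟩ | ⟨a, ha, rfl⟩) <;> simp [IH _ |>.mp ha]
    · intro hl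
      cases l with
      | nil => simp at hl
      | cons a l =>
        cases a
        · exact Or.inl ⟨l, (IH l).mpr (by simpa using hl), rfl⟩
        · exact Or.inr ⟨l, (IH l).mpr (by simpa using hl), rfl⟩

theorem filter_empty_of_sum_gt (n : ℕ) (bs : List ℕ) (h : n < bs.sum) :
    ((boolStrings n).filter (fun l => runLengths l = bs)).card = 0 := by
  rw [Finset.card_eq_zero, Finset.filter_eq_empty_iff]
  rintro l hl rfl
  have h1 : (runLengths l).sum = l.count true := runLengths_sum l
  have h2 : l.count true ≤ l.length := List.count_le_length
  rw [mem_boolStrings] at hl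
  omega

theorem runLengths_true_cons (l : List Bool) (b : ℕ) (bs' : List ℕ) (hb : 1 ≤ b) :
    runLengths (true :: l) = b :: bs' ↔
      (l = List.replicate (b - 1) true ∧ bs' = []) ∨
      (∃ l', l = List.replicate (b - 1) true ++ false :: l' ∧ runLengths l' = bs') := by
  obtain ⟨b', rfl⟩ : ∃ b', b = b' + 1 := ⟨b - 1, by omega⟩
  simp only [Nat.add_sub_cancel]
  constructor
  · intro h
    rcases boolList_cases (true :: l) with h0 | ⟨l', h1⟩ | ⟨t, ht, h2⟩ | ⟨t, l', ht, h3⟩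
    · simp at h0
    · simp at h1
    · obtain ⟨t', rfl⟩ : ∃ t', t = t' + 1 := ⟨t - 1, by omega⟩
      rw [h2, runLengths_true_replicate _ ht] at h
      injection h with hbt hbs
      rw [List.replicate_succ] at h2
      have hl : l = List.replicate t' true := by injection h2
      left
      obtain rfl : t' = b' := by omega
      exact ⟨hl, hbs.symm⟩

    · obtain ⟨t', rfl⟩ : ∃ t', t = t' + 1 := ⟨t - 1, by omega⟩
      rw [h3, runLengths_true_run _ ht _ (by simp), runLengths_false_cons] at h
      injection h with hbt hbs
      rw [List.replicate_succ] at h3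
      have hl : l = List.replicate t' true ++ false :: l' := by
        injection h3 with _ h3'
      right
      obtain rfl : t' = b' := by omega
      exact ⟨l', hl, hbs⟩
  · rintro (⟨rfl, rfl⟩ | ⟨l', rfl, hl'⟩)
    · have h2 : true :: List.replicate b' true = List.replicate (b' + 1) true := by
        rw [List.replicate_succ]
      rw [h2, runLengths_true_replicate _ hb]
    · have h2 : true :: (List.replicate b' true ++ false :: l')
          = List.replicate (b' + 1) true ++ false :: l' := by
        rw [List.replicate_succ]; rfl
      rw [h2, runLengths_true_run _ hb _ (by simp), runLengths_false_cons, hl']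

theorem card_true_branch (n b : ℕ) (bs' : List ℕ) (hb : 1 ≤ b) :
    ((boolStrings n).filter (fun l => runLengths (true :: l) = b :: bs')).card
      = if n + 1 = b ∧ bs' = [] then 1
        else if b ≤ n then
          ((boolStrings (n - b)).filter (fun l => runLengths l = bs')).card
        else 0 := by
  split_ifs with h1 h2
  · obtain ⟨hb1, rfl⟩ := h1
    rw [Finset.card_eq_one]
    refine ⟨List.replicate (b - 1) true, ?_⟩
    ext l
    simp only [Finset.mem_filter, mem_boolStrings, Finset.mem_singleton]
    rw [runLengths_true_cons l b [] hb]
    constructor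
    · rintro ⟨hlen, (⟨rfl, -⟩ | ⟨l', rfl, -⟩)⟩
      · rfl
      · exfalso
        simp only [List.length_append, List.length_replicate, List.length_cons] at hlen
        omega
    · rintro rfl
      exact ⟨by simp; omega, Or.inl ⟨rfl, rfl⟩⟩
  · rw [eq_comm]
    apply Finset.card_bij (fun l _ => List.replicate (b - 1) true ++ false :: l)
    · intro a ha
      simp only [Finset.mem_filter, mem_boolStrings] at ha ⊢
      refine ⟨by simp; omega, ?_⟩
      rw [runLengths_true_cons _ b bs' hb]
      exact Or.inr ⟨a, rfl, ha.2⟩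
    · intro a _ a' _ h
      have := List.append_cancel_left h
      injection this
    · intro l hl
      simp only [Finset.mem_filter, mem_boolStrings] at hl
      obtain ⟨hlen, hrl⟩ := hl
      rw [runLengths_true_cons _ b bs' hb] at hrl
      rcases hrl with ⟨rfl, rfl⟩ | ⟨l', rfl, hl'⟩
      · exfalso
        simp only [List.length_replicate] at hlen
        omega
      · refine ⟨l', ?_, rfl⟩
        simp only [Finset.mem_filter, mem_boolStrings]
        simp only [List.length_append, List.length_replicate, List.length_cons] at hlen
        exact ⟨by omega, hl'⟩
  · rw [Finset.card_eq_zero, Finset.filter_eq_empty_iff]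
    intro l hl hc
    rw [mem_boolStrings] at hl
    rw [runLengths_true_cons _ b bs' hb] at hc
    rcases hc with ⟨rfl, rfl⟩ | ⟨l', rfl, -⟩
    · simp only [List.length_replicate] at hl
      exact h1 ⟨by omega, rfl⟩
    · simp only [List.length_append, List.length_replicate, List.length_cons] at hl
      exact h2 (by omega)

theorem count_main : ∀ n bs, (∀ x ∈ bs, 0 < x) → bs.sum ≤ n →
    ((boolStrings n).filter (fun l => runLengths l = bs)).card
      = (n - bs.sum + 1).choose bs.length := by
  intro n
  induction n using Nat.strong_induction_on with
  | _ n IH =>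
  intro bs hpos hsum
  match n with
  | 0 =>
    have : bs = [] := by
      cases bs with
      | nil => rfl
      | cons b bs' => exfalso; have := hpos b (by simp); simp at hsum; omega
    subst this
    simp [boolStrings, Finset.filter_singleton, runLengths_nil]
  | (n+1) =>
    have hsplit : (boolStrings (n+1)).filter (fun l => runLengths l = bs)
        = (((boolStrings n).filter (fun l => runLengths l = bs)).image (List.cons false))
          ∪ (((boolStrings n).filter (fun l => runLengths (true :: l) = bs)).image
              (List.cons true)) := by
      rw [show boolStrings (n+1) = ((boolStrings n).image (List.cons false))
            ∪ ((boolStrings n).image (List.cons true)) from rfl,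
          Finset.filter_union, Finset.filter_image, Finset.filter_image]
      congr 2
      · ext l
        simp [runLengths_false_cons]
    have hdisj : Disjoint
        (((boolStrings n).filter (fun l => runLengths l = bs)).image (List.cons false))
        (((boolStrings n).filter (fun l => runLengths (true :: l) = bs)).image
            (List.cons true)) := by
      rw [Finset.disjoint_left]
      rintro x hx hy
      simp only [Finset.mem_image] at hx hy
      obtain ⟨a, _, rfl⟩ := hx
      obtain ⟨b, _, hb⟩ := hy
      simp at hb
    rw [hsplit, Finset.card_union_of_disjoint hdisj, Finset.card_image_of_injective _
        (fun a b h => by injection h), Finset.card_image_of_injective _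
        (fun a b h => by injection h)]
    match bs, hpos with
    | [], _ =>
      have h1 : ((boolStrings n).filter (fun l => runLengths (true :: l) = ([] : List ℕ))).card
          = 0 := by
        rw [Finset.card_eq_zero, Finset.filter_eq_empty_iff]
        intro l _ hc
        have := runLengths_sum (true :: l)
        rw [hc] at this
        simp at this
      rw [h1, IH n (by omega) [] (by simp) (by simp)]
      simp
    | b :: bs', hpos =>
      have hb : 1 ≤ b := hpos b (by simp)
      have hbs'pos : ∀ x ∈ bs', 0 < x := fun x hx => hpos x (by simp [hx])
      simp only [List.sum_cons] at hsum
      have htrue := card_true_branch n b bs' hb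
      rcases Nat.lt_or_ge (b + bs'.sum) (n + 1) with hklt | hkge
      · -- k ≤ n
        have hble : b ≤ n := by omega
        rw [IH n (by omega) (b :: bs') hpos (by simp only [List.sum_cons]; omega)]
        rw [htrue, if_neg (by rintro ⟨h, -⟩; omega), if_pos hble,
            IH (n - b) (by omega) bs' hbs'pos (by omega)]
        simp only [List.length_cons, List.sum_cons]
        have e1 : n - b - bs'.sum = n - (b + bs'.sum) := by omega
        have e2 : n + 1 - (b + bs'.sum) + 1 = (n - (b + bs'.sum) + 1) + 1 := by omega
        rw [e1, e2]
        have pascal := Nat.choose_succ_succ (n - (b + bs'.sum) + 1) bs'.length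
        simp only [Nat.succ_eq_add_one] at pascal
        omega
      · -- k = n + 1
        have hk : b + bs'.sum = n + 1 := by omega
        have hfalse : ((boolStrings n).filter (fun l => runLengths l = b :: bs')).card = 0 :=
          filter_empty_of_sum_gt n (b :: bs') (by simp only [List.sum_cons]; omega)
        rcases Nat.lt_or_ge n b with hbn | hbn
        · have hb1 : b = n + 1 := by omega
          have hbs'0 : bs'.sum = 0 := by omega
          have hbs' : bs' = [] := by
            cases bs' with
            | nil => rfl
            | cons x xs =>
              have := hbs'pos x (by simp)
              simp only [List.sum_cons] at hbs'0
              omega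
          subst hbs'
          rw [hfalse, htrue, if_pos ⟨hb1.symm, rfl⟩]
          simp only [List.sum_cons, List.sum_nil, List.length_cons, List.length_nil]
          rw [show n + 1 - (b + 0) + 1 = 1 by omega]
          simp
        · have hbs' : bs' ≠ [] := by
            intro h
            subst h
            simp only [List.sum_nil] at hk
            omega
          rw [hfalse, htrue, if_neg (by rintro ⟨h, -⟩; omega), if_pos hbn,
              filter_empty_of_sum_gt (n - b) bs' (by omega)]
          simp only [List.sum_cons, List.length_cons]
          rw [show n + 1 - (b + bs'.sum) + 1 = 1 by omega,
              Nat.choose_eq_zero_of_lt (by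
                have := List.length_pos_iff.mpr hbs'
                omega)]

end RL

namespace RL

theorem ofFn_getD (n : ℕ) (l : List Bool) (hl : l.length = n) :
    List.ofFn (fun i : Fin n => l.getD i false) = l := by
  apply List.ext_getElem
  · simp [hl]
  · intro i h1 h2
    simp only [List.getElem_ofFn]
    rw [List.getD_eq_getElem]

theorem sum_ofFn_eq (n : ℕ) (p : List Bool → Prop) [DecidablePred p] (f : List Bool → ℚ) :
    ∑ A ∈ Finset.univ.filter (fun A : Fin n → Bool => p (List.ofFn A)), f (List.ofFn A)
      = ∑ l ∈ (boolStrings n).filter p, f l := by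
  apply Finset.sum_nbij' (i := fun A => List.ofFn A)
    (j := fun l => fun i : Fin n => l.getD i false)
  · intro A hA
    simp only [Finset.mem_filter, Finset.mem_univ, true_and] at hA ⊢
    exact ⟨(mem_boolStrings n _).mpr (by simp), hA⟩
  · intro l hl
    simp only [Finset.mem_filter, mem_boolStrings] at hl
    simp only [Finset.mem_filter, Finset.mem_univ, true_and]
    rw [ofFn_getD n l hl.1]
    exact hl.2
  · intro A hA
    funext i
    simp
  · intro l hl
    simp only [Finset.mem_filter, mem_boolStrings] at hl
    exact ofFn_getD n l hl.1
  · intro A hA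
    rfl

end RL


/-- Lemma 1 of the paper: pick a binary string `A` of length `n` with exactly `k`
ones uniformly at random, then pick one of its chains uniformly at random.  The
probability that the chosen chain has length `c`, namely
`(1 / C(n,k)) · ∑_A (number of c-chains of A) / (number of chains of A)`, equals
`∑_p [C(n - k + 1, |p|) / C(n, k)] · (number of parts of p equal to c) / |p|`,
summing over all compositions `p` of `k`. -/
theorem stmt6 (n k c : ℕ) (hk : 1 ≤ k) (hkn : k ≤ n) (hc : 1 ≤ c) :
    (1 / (n.choose k : ℚ)) *
      ∑ A ∈ Finset.univ.filter (fun A : Fin n → Bool =>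
          (List.ofFn A).count true = k),
        (((runLengths (List.ofFn A)).count c : ℚ) /
          ((runLengths (List.ofFn A)).length : ℚ))
    = ∑ p : Composition k,
        (((n - k + 1).choose p.length : ℚ) / (n.choose k : ℚ)) *
          ((p.blocks.count c : ℚ) / (p.length : ℚ)) := by
  classical
  rw [RL.sum_ofFn_eq n (fun l => l.count true = k)
      (fun l => ((runLengths l).count c : ℚ) / ((runLengths l).length : ℚ))]
  set φ : List Bool → Composition k := fun l =>
    if h : (runLengths l).sum = k then
      ⟨runLengths l, fun {i} hi => RL.runLengths_pos l i hi, h⟩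
    else Composition.ones k with hφ
  have key : ∑ l ∈ (RL.boolStrings n).filter (fun l => l.count true = k),
        (((runLengths l).count c : ℚ) / ((runLengths l).length : ℚ))
      = ∑ p : Composition k, ∑ l ∈ ((RL.boolStrings n).filter
            (fun l => l.count true = k)).filter (fun l => φ l = p),
          (((runLengths l).count c : ℚ) / ((runLengths l).length : ℚ)) := by
    rw [Finset.sum_fiberwise_of_maps_to (fun x _ => Finset.mem_univ (φ x))]
  rw [key]
  rw [Finset.mul_sum]
  apply Finset.sum_congr rfl
  intro p _
  have hfiber : ((RL.boolStrings n).filter (fun l => l.count true = k)).filter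
        (fun l => φ l = p)
      = (RL.boolStrings n).filter (fun l => runLengths l = p.blocks) := by
    rw [Finset.filter_filter]
    apply Finset.filter_congr
    intro l hl
    constructor
    · rintro ⟨hcount, hp⟩
      have hsum : (runLengths l).sum = k := by rw [RL.runLengths_sum]; exact hcount
      rw [hφ] at hp
      simp only [hsum, dif_pos] at hp
      have := congrArg Composition.blocks hp
      simpa using this
    · intro hrl
      have hsum : (runLengths l).sum = k := by rw [hrl]; exact p.blocks_sum
      have hcount : l.count true = k := by rw [← RL.runLengths_sum, hsum]
      refine ⟨hcount, ?_⟩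
      rw [hφ]
      simp only [hsum, dif_pos]
      apply Composition.ext
      simpa using hrl
  rw [hfiber]
  have hconst : ∑ l ∈ (RL.boolStrings n).filter (fun l => runLengths l = p.blocks),
        (((runLengths l).count c : ℚ) / ((runLengths l).length : ℚ))
      = ((RL.boolStrings n).filter (fun l => runLengths l = p.blocks)).card •
          (((p.blocks.count c : ℚ)) / ((p.length : ℚ))) := by
    rw [← Finset.sum_const]
    apply Finset.sum_congr rfl
    intro l hl
    simp only [Finset.mem_filter] at hl
    rw [hl.2]
  rw [hconst, RL.count_main n p.blocks (fun x hx => p.blocks_pos hx) (by rw [p.blocks_sum]; exact hkn),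
      p.blocks_sum, Composition.blocks_length]
  rw [nsmul_eq_mul]
  ring
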